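/- Let A, C be bounded self-adjoint operators and B a bounded operator as in the block-matrix setup. Suppose σ(C) ⊆ (-∞, α] ∪ [β, ∞) where α < β, and σ(A) ⊂ (α, β). Then for every λ ∈ (α, β) and every unit vector f ∈ H_A, the quadratic form of M(λ) = λ I - A + B (C - λ I)^{-1} B* satisfies the two-sided estimate λ - sup σ(A) - ‖B‖²/(λ - α) ≤ ⟨M(λ) f, f⟩ ≤ λ - inf σ(A) - ‖B‖²/(λ - β). -/

import Mathlib

/-!
Write `T = (C - λ)⁻¹` and `g = B* f`, so that `⟪M(λ) f, f⟫ = λ - ⟪A f, f⟫ + ⟪T g, g⟫`. The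
Loewner bounds `inf σ(A) ≤ A ≤ sup σ(A)` control the middle term. Since `λ` lies in the spectral
gap `(α, β)` of `C`, the continuous functional calculus writes `T` as `x ↦ (x - λ)⁻¹` applied to
`C`, and on `(-∞, α] ∪ [β, ∞)` this function takes values in `[(α - λ)⁻¹, (β - λ)⁻¹]`; as this
interval contains `0` and `‖g‖ ≤ ‖B‖`, the last term lies in `[(α - λ)⁻¹‖B‖², (β - λ)⁻¹‖B‖²]`.
-/

open scoped InnerProductSpace

lemma inv_sub_mem_Icc_of_mem_Iic_union_Ici {α β r x : ℝ} (hr : r ∈ Set.Ioo α β)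
    (hx : x ∈ Set.Iic α ∪ Set.Ici β) :
    (x - r)⁻¹ ∈ Set.Icc (α - r)⁻¹ (β - r)⁻¹ := by
  obtain ⟨hαr, hrβ⟩ := hr
  rcases hx with hxα | hβx
  · have hxr : x - r < 0 := by linarith [hxα.out]
    exact ⟨(inv_le_inv_of_neg (by linarith) hxr).mpr (by linarith [hxα.out]),
      (inv_lt_zero.mpr hxr).le.trans (inv_nonneg.mpr (by linarith))⟩
  · have hβr : 0 < β - r := by linarith
    exact ⟨(inv_lt_zero.mpr (by linarith)).le.trans (inv_nonneg.mpr (by linarith [hβx.out])),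
      inv_anti₀ hβr (by linarith [hβx.out])⟩

namespace ContinuousLinearMap

section Hilbert

variable {H : Type*} [NormedAddCommGroup H] [InnerProductSpace ℂ H]

lemma re_inner_le_re_inner_of_le {S T : H →L[ℂ] H} (h : S ≤ T) (x : H) :
    (⟪S x, x⟫_ℂ).re ≤ (⟪T x, x⟫_ℂ).re := by
  simpa [inner_sub_left] using ((le_def S T).mp h).re_inner_nonneg_left x

lemma re_inner_algebraMap_apply (r : ℝ) (x : H) :
    (⟪algebraMap ℝ (H →L[ℂ] H) r x, x⟫_ℂ).re = r * ‖x‖ ^ 2 := by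
  simp [Algebra.algebraMap_eq_smul_one, ← Complex.coe_smul, inner_self_eq_norm_sq_to_K,
    ← Complex.ofReal_pow, mul_comm]

variable [CompleteSpace H]

lemma re_inner_le_sSup_spectrum_mul {A : H →L[ℂ] H} (hA : IsSelfAdjoint A) (x : H) :
    (⟪A x, x⟫_ℂ).re ≤ sSup (spectrum ℝ A) * ‖x‖ ^ 2 := by
  rw [← re_inner_algebraMap_apply]
  exact re_inner_le_re_inner_of_le (le_algebraMap_of_spectrum_le
    fun _ h ↦ le_csSup (spectrum.isCompact A).bddAbove h) x

lemma sInf_spectrum_mul_le_re_inner {A : H →L[ℂ] H} (hA : IsSelfAdjoint A) (x : H) :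
    sInf (spectrum ℝ A) * ‖x‖ ^ 2 ≤ (⟪A x, x⟫_ℂ).re := by
  rw [← re_inner_algebraMap_apply]
  exact re_inner_le_re_inner_of_le (algebraMap_le_of_le_spectrum
    fun _ h ↦ csInf_le (spectrum.isCompact A).bddBelow h) x

lemma ringInverse_sub_algebraMap_eq_cfc {C : H →L[ℂ] H} (hC : IsSelfAdjoint C) {r : ℝ}
    (hr : r ∉ spectrum ℝ C) :
    Ring.inverse (C - algebraMap ℝ _ r) = cfc (fun x ↦ (x - r)⁻¹) C := by
  rw [cfc_inv (fun x ↦ x - r) C (fun x hx h ↦ hr (sub_eq_zero.mp h ▸ hx)),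
    cfc_sub (fun x ↦ x) (fun _ ↦ r) C, cfc_id' ℝ C, cfc_const r C]

lemma ringInverse_sub_algebraMap_mem_Icc {C : H →L[ℂ] H} (hC : IsSelfAdjoint C) {α β r : ℝ}
    (hC_gap : spectrum ℝ C ⊆ Set.Iic α ∪ Set.Ici β) (hr : r ∈ Set.Ioo α β) :
    Ring.inverse (C - algebraMap ℝ _ r) ∈
      Set.Icc (algebraMap ℝ (H →L[ℂ] H) (α - r)⁻¹) (algebraMap ℝ _ (β - r)⁻¹) := by
  have hr_notMem : r ∉ spectrum ℝ C := fun h ↦ by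
    rcases hC_gap h with h | h
    exacts [hr.1.not_ge h, hr.2.not_ge h]
  rw [ringInverse_sub_algebraMap_eq_cfc hC hr_notMem]
  have hbound x (hx : x ∈ spectrum ℝ C) := inv_sub_mem_Icc_of_mem_Iic_union_Ici hr (hC_gap hx)
  have hcont : ContinuousOn (fun x ↦ (x - r)⁻¹) (spectrum ℝ C) :=
    (continuous_sub_right r).continuousOn.inv₀ fun x hx ↦
      sub_ne_zero.mpr fun h ↦ hr_notMem (h ▸ hx)
  exact ⟨algebraMap_le_cfc _ _ C (fun x hx ↦ (hbound x hx).1) hcont,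
    cfc_le_algebraMap _ _ C (fun x hx ↦ (hbound x hx).2) hcont⟩

end Hilbert

variable {E F : Type*} [NormedAddCommGroup E] [InnerProductSpace ℂ E] [CompleteSpace E]
  [NormedAddCommGroup F] [InnerProductSpace ℂ F] [CompleteSpace F]

lemma re_inner_schur_apply (c : ℝ) (A : E →L[ℂ] E) (B : F →L[ℂ] E) (T : F →L[ℂ] F) (f : E) :
    (⟪((c : ℂ) • 1 - A + B ∘L T ∘L adjoint B) f, f⟫_ℂ).re =
      c * ‖f‖ ^ 2 - (⟪A f, f⟫_ℂ).re + (⟪T (adjoint B f), adjoint B f⟫_ℂ).re := by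
  simp [inner_self_eq_norm_sq_to_K, ← Complex.ofReal_pow, adjoint_inner_right]

lemma norm_adjoint_apply_le (B : F →L[ℂ] E) (f : E) : ‖adjoint B f‖ ≤ ‖B‖ * ‖f‖ :=
  adjoint.norm_map B ▸ (adjoint B).le_opNorm f

end ContinuousLinearMap

open ContinuousLinearMap in
theorem schur_complement_form_estimate
    {HA HC : Type*} [NormedAddCommGroup HA] [InnerProductSpace ℂ HA] [CompleteSpace HA]
    [NormedAddCommGroup HC] [InnerProductSpace ℂ HC] [CompleteSpace HC]
    (A : HA →L[ℂ] HA) (hA : IsSelfAdjoint A)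
    (C : HC →L[ℂ] HC) (hC : IsSelfAdjoint C)
    (B : HC →L[ℂ] HA)
    (α β : ℝ)
    (hCspec : spectrum ℝ C ⊆ Set.Iic α ∪ Set.Ici β)
    (lam : ℝ) (hlam : lam ∈ Set.Ioo α β)
    (M : HA →L[ℂ] HA)
    (hM : M = (lam : ℂ) • 1 - A +
      B ∘L Ring.inverse (C - (lam : ℂ) • 1) ∘L ContinuousLinearMap.adjoint B)
    (f : HA) (hf : ‖f‖ = 1) :
    lam - sSup (spectrum ℝ A) - ‖B‖ ^ 2 / (lam - α) ≤ (⟪M f, f⟫_ℂ).re ∧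
      (⟪M f, f⟫_ℂ).re ≤ lam - sInf (spectrum ℝ A) - ‖B‖ ^ 2 / (lam - β) := by
  have hsmul : ((lam : ℂ) • 1 : HC →L[ℂ] HC) = algebraMap ℝ _ lam := by
    simp [Algebra.algebraMap_eq_smul_one]
  set g := adjoint B f
  have hg : ‖g‖ ^ 2 ≤ ‖B‖ ^ 2 := by
    gcongr
    simpa [hf] using norm_adjoint_apply_le B f
  obtain ⟨hT_ge, hT_le⟩ := ringInverse_sub_algebraMap_mem_Icc hC hCspec hlam
  have hT_lower := re_inner_le_re_inner_of_le hT_ge g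
  have hT_upper := re_inner_le_re_inner_of_le hT_le g
  rw [re_inner_algebraMap_apply] at hT_lower hT_upper
  have hA_upper := re_inner_le_sSup_spectrum_mul hA f
  have hA_lower := sInf_spectrum_mul_le_re_inner hA f
  have hαlam : (α - lam)⁻¹ * ‖B‖ ^ 2 ≤ (α - lam)⁻¹ * ‖g‖ ^ 2 :=
    mul_le_mul_of_nonpos_left hg (inv_nonpos.mpr (by linarith [hlam.1]))
  have hβlam : (β - lam)⁻¹ * ‖g‖ ^ 2 ≤ (β - lam)⁻¹ * ‖B‖ ^ 2 :=
    mul_le_mul_of_nonneg_left hg (inv_nonneg.mpr (by linarith [hlam.2]))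
  rw [hf] at hA_upper hA_lower
  rw [hM, hsmul, re_inner_schur_apply, hf]
  have hα_div : ‖B‖ ^ 2 / (lam - α) = -((α - lam)⁻¹ * ‖B‖ ^ 2) := by
    rw [div_eq_inv_mul, ← neg_sub α lam, inv_neg, neg_mul]
  have hβ_div : ‖B‖ ^ 2 / (lam - β) = -((β - lam)⁻¹ * ‖B‖ ^ 2) := by
    rw [div_eq_inv_mul, ← neg_sub β lam, inv_neg, neg_mul]
  constructor <;> linarith
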